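/- For m > 2 and odd n = 2ℓ+1 (ℓ ≥ 1), the vector with entries: 0 in the first mℓ coordinates, −1 in the next m coordinates, 1 in the next m coordinates, and 0 in the last m(ℓ−1) coordinates, is an eigenvector of M^±(m,n) with eigenvalue 2(ℓ+1). -/
import Mathlib

/-- The mn×mn diagonal matrix D(m,n) with diagonal entries 2(j-1), each repeated m times
(rows/columns indexed by pairs (j,k) with j ∈ Fin n the symbol and k ∈ Fin m the color). -/
def Dmat (m n : ℕ) : Matrix (Fin n × Fin m) (Fin n × Fin m) ℂ :=
  Matrix.of fun a b => if a = b then (2 * (a.1.val : ℂ)) else 0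

/-- The block matrix C^±(m,n): the (a,b) block (1-indexed blocks a,b with a+b ≤ n+1,
i.e. 0-indexed a.1+b.1+1 ≤ n) is the m×m circulant with first row (0,1,0,…,0,1),
and all other blocks are zero. -/
def CpmBlock (m n : ℕ) : Matrix (Fin n × Fin m) (Fin n × Fin m) ℂ :=
  Matrix.of fun a b =>
    if a.1.val + b.1.val + 1 ≤ n then
      (if (b.2.val + m - a.2.val) % m = 1 % m then (1 : ℂ) else 0) +
      (if (a.2.val + m - b.2.val) % m = 1 % m then (1 : ℂ) else 0)
    else 0

lemma mod2 (m x : ℕ) (hx : x < 2 * m) : x % m = if x < m then x else x - m := by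
  split
  · exact Nat.mod_eq_of_lt ‹_›
  · rw [Nat.mod_eq_sub_mod (by omega), Nat.mod_eq_of_lt (by omega)]

lemma sum_indic1 (m : ℕ) (hm : 2 < m) (k : Fin m) :
    ∑ k' : Fin m, (if (k'.val + m - k.val) % m = 1 % m then (1:ℂ) else 0) = 1 := by
  obtain ⟨c, hc⟩ : ∃ c : Fin m, (c : ℕ) = (k.val + 1) % m :=
    ⟨⟨(k.val + 1) % m, Nat.mod_lt _ (by omega)⟩, rfl⟩
  have h : ∀ k' : Fin m, ((k'.val + m - k.val) % m = 1 % m ↔ k' = c) := by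
    intro k'
    have h1 := k'.isLt; have h2 := k.isLt
    rw [Fin.ext_iff, hc]
    rw [mod2 m (k'.val + m - k.val) (by omega),
      Nat.mod_eq_of_lt (show (1:ℕ) < m by omega), mod2 m (k.val + 1) (by omega)]
    split_ifs <;> omega
  simp only [h, Finset.sum_ite_eq', Finset.mem_univ, if_true]

lemma sum_indic2 (m : ℕ) (hm : 2 < m) (k : Fin m) :
    ∑ k' : Fin m, (if (k.val + m - k'.val) % m = 1 % m then (1:ℂ) else 0) = 1 := by
  obtain ⟨c, hc⟩ : ∃ c : Fin m, (c : ℕ) = (k.val + m - 1) % m :=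
    ⟨⟨(k.val + m - 1) % m, Nat.mod_lt _ (by omega)⟩, rfl⟩
  have h : ∀ k' : Fin m, ((k.val + m - k'.val) % m = 1 % m ↔ k' = c) := by
    intro k'
    have h1 := k'.isLt; have h2 := k.isLt
    rw [Fin.ext_iff, hc]
    rw [mod2 m (k.val + m - k'.val) (by omega),
      Nat.mod_eq_of_lt (show (1:ℕ) < m by omega), mod2 m (k.val + m - 1) (by omega)]
    split_ifs <;> omega
  simp only [h, Finset.sum_ite_eq', Finset.mem_univ, if_true]

/-- For m > 2 and odd n = 2ℓ+1 with ℓ ≥ 1: the vector with entries 0 (first mℓ coords),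
-1 (next m coords), 1 (next m coords), 0 (last m(ℓ-1) coords) is an eigenvector of
M^±(m,n) with eigenvalue 2(ℓ+1). -/
theorem stmt_13 (m l : ℕ) (hm : 2 < m) (hl : 1 ≤ l) :
    (CpmBlock m (2 * l + 1) + Dmat m (2 * l + 1)).mulVec
        (fun p => if p.1.val < l then (0 : ℂ) else if p.1.val = l then -1
          else if p.1.val = l + 1 then 1 else 0) =
      ((2 * (l + 1) : ℕ) : ℂ) • (fun p : Fin (2 * l + 1) × Fin m =>
        if p.1.val < l then (0 : ℂ) else if p.1.val = l then -1
          else if p.1.val = l + 1 then 1 else 0) ∧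
    (fun p : Fin (2 * l + 1) × Fin m =>
        if p.1.val < l then (0 : ℂ) else if p.1.val = l then -1
          else if p.1.val = l + 1 then 1 else 0) ≠ 0 := by
  set n := 2 * l + 1 with hn
  set V : Fin n → ℂ := fun j => if j.val < l then (0 : ℂ) else if j.val = l then -1
      else if j.val = l + 1 then 1 else 0 with hV
  constructor
  · funext p
    obtain ⟨a, k⟩ := p
    have ha := a.isLt
    have hD : ∑ q : Fin n × Fin m, Dmat m n (a, k) q * V q.1 = 2 * a.val * V a := by
      simp only [Dmat, Matrix.of_apply, ite_mul, zero_mul]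
      rw [Finset.sum_ite_eq Finset.univ ((a,k) : Fin n × Fin m)
        (fun q => 2 * (a.val:ℂ) * V q.1)]
      simp
    have inner : ∀ j : Fin n, ∑ k' : Fin m, CpmBlock m n (a, k) (j, k') =
        if a.val + j.val + 1 ≤ n then 2 else 0 := by
      intro j
      simp only [CpmBlock, Matrix.of_apply]
      split
      · rw [Finset.sum_add_distrib, sum_indic1 m hm k, sum_indic2 m hm k]; norm_num
      · simp
    have hVsplit : ∀ j : Fin n, V j =
        (if j = (⟨l, by omega⟩ : Fin n) then (-1:ℂ) else 0) +
        (if j = (⟨l + 1, by omega⟩ : Fin n) then (1:ℂ) else 0) := by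
      intro j
      have hj := j.isLt
      simp only [hV, Fin.ext_iff, Fin.val_mk]
      split_ifs <;> (try norm_num) <;> omega
    have hC : ∑ q : Fin n × Fin m, CpmBlock m n (a, k) q * V q.1 =
        (if a.val + l + 1 ≤ n then (2:ℂ) else 0) * (-1) +
        (if a.val + (l + 1) + 1 ≤ n then (2:ℂ) else 0) * 1 := by
      rw [Fintype.sum_prod_type]
      have hrow : ∀ j : Fin n, ∑ k' : Fin m, CpmBlock m n (a, k) (j, k') * V j =
          (if a.val + j.val + 1 ≤ n then (2:ℂ) else 0) * V j := by
        intro j; rw [← Finset.sum_mul, inner j]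
      simp only [hrow]
      simp only [hVsplit, mul_add, Finset.sum_add_distrib, mul_ite, mul_one, mul_zero, mul_neg,
        Finset.sum_ite_eq', Finset.mem_univ, if_true, Fin.val_mk]
      try ring
    have hLHS : ((CpmBlock m n + Dmat m n).mulVec (fun p => V p.1)) (a, k) =
        (if a.val + l + 1 ≤ n then (2:ℂ) else 0) * (-1) +
        (if a.val + (l + 1) + 1 ≤ n then (2:ℂ) else 0) * 1 + 2 * a.val * V a := by
      simp only [Matrix.mulVec, dotProduct, Matrix.add_apply, add_mul]
      rw [Finset.sum_add_distrib, hC, hD]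
    show ((CpmBlock m n + Dmat m n).mulVec (fun p => V p.1)) (a, k) = _
    rw [hLHS]
    show _ = ((2 * (l + 1) : ℕ) : ℂ) * V a
    simp only [hV]
    by_cases h1 : a.val < l
    · rw [if_pos (show a.val + l + 1 ≤ n by omega),
        if_pos (show a.val + (l + 1) + 1 ≤ n by omega), if_pos h1]
      ring
    · by_cases h2 : a.val = l
      · rw [if_pos (show a.val + l + 1 ≤ n by omega),
          if_neg (show ¬ a.val + (l + 1) + 1 ≤ n by omega), if_neg h1, if_pos h2, h2]
        push_cast
        ring
      · by_cases h3 : a.val = l + 1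
        · rw [if_neg (show ¬ a.val + l + 1 ≤ n by omega),
            if_neg (show ¬ a.val + (l + 1) + 1 ≤ n by omega), if_neg h1, if_neg h2,
            if_pos h3, h3]
          push_cast
          ring
        · rw [if_neg (show ¬ a.val + l + 1 ≤ n by omega),
            if_neg (show ¬ a.val + (l + 1) + 1 ≤ n by omega), if_neg h1, if_neg h2, if_neg h3]
          ring
  · intro h
    have := congrFun h (⟨l, by omega⟩, ⟨0, by omega⟩)
    simp at this
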